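/- arXiv:2402.02762 — 2 statements merged into one kernel-verified Lean document; each statement's English description precedes it below -/
import Mathlib

section
/- Let p be an odd prime, ζ_{p−1} a primitive (p−1)th root of unity, 𝔭 a prime ideal of ℤ[ζ_{p−1}] above p, and ψ the Dirichlet character mod p corresponding to 𝔭. Let B_{1,ψ} = (1/p)·Σ_{m=1}^{p−1} ψ(m)·m be the first generalized Bernoulli number of ψ. Then B_{1,ψ} ≠ 0, and for every integer n ≥ 1 the element (2/B_{1,ψ})·Σ_{d | n} ψ(d) of ℚ(ζ_{p−1}) has 𝔭-adic valuation ν_𝔭 at least 1. Equivalently, the Eisenstein series E_{1,ψ} = 1 − (2/B_{1,ψ}) Σ_{n≥1} (Σ_{d|n} ψ(d)) q^n satisfies ν_𝔭(E_{1,ψ}) ≥ 0 and E_{1,ψ} ≡ 1 mod 𝔭. -/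
/-!
Lift each value `ψ(m)` to the algebraic integer `b_m` it comes from and put
`S = ∑_{m=1}^{p-1} b_m m`, so that `B_{1,ψ} = S / p`. Since `b_m m ≡ 1 mod 𝔭`,
`S ≡ p - 1 ≡ -1 mod 𝔭`; in particular `S ∉ 𝔭` and `S ≠ 0`. Then
`(2 / B_{1,ψ}) ∑_{d ∣ n} ψ(d) = 2 p T / S`, where `T ∈ 𝓞 F` lifts the divisor sum,
and `2 p T ∈ 𝔭` because `p ∈ 𝔭`.
-/

open Complex NumberField
open scoped IntermediateField

noncomputable section

/-- `ψ(m)·m ≡ 1 mod 𝔭` for all integers `1 ≤ m ≤ p - 1`; here the value `ψ(m)` is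
required to be (the image in `ℂ` of) an element `b` of `𝓞 F`
(intended: `F = ℚ(ζ_{p-1})`, so `𝓞 F = ℤ[ζ_{p-1}]`). -/
def IsCorrChar (p : ℕ) (F : IntermediateField ℚ ℂ) (𝔭 : Ideal (𝓞 F))
    (ψ : DirichletCharacter ℂ p) : Prop :=
  ∀ m : ℕ, 1 ≤ m → m ≤ p - 1 →
    ∃ b : 𝓞 F, ((b : F) : ℂ) = ψ (m : ZMod p) ∧ b * (m : 𝓞 F) - 1 ∈ 𝔭

/-- The first generalized Bernoulli number `B_{1,ψ} = (1/p)·∑_{m=1}^{p-1} ψ(m)·m`. -/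
def bernoulliOne (p : ℕ) (ψ : DirichletCharacter ℂ p) : ℂ :=
  (p : ℂ)⁻¹ * ∑ m ∈ Finset.Icc 1 (p - 1), ψ (m : ZMod p) * (m : ℂ)

lemma IntermediateField.algebraMap_ringOfIntegers_apply (F : IntermediateField ℚ ℂ) (b : 𝓞 F) :
    algebraMap (𝓞 F) ℂ b = ((b : F) : ℂ) :=
  rfl

lemma IntermediateField.ringOfIntegers_algebraMap_injective (F : IntermediateField ℚ ℂ) :
    Function.Injective (algebraMap (𝓞 F) ℂ) :=
  (algebraMap F ℂ).injective.comp RingOfIntegers.coe_injective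

lemma Ideal.notMem_of_add_one_mem {R : Type*} [CommRing R] {I : Ideal R} (hI : I ≠ ⊤) {x : R}
    (hx : x + 1 ∈ I) : x ∉ I := fun h ↦
  hI ((Ideal.eq_top_iff_one _).mpr (by simpa using I.sub_mem hx h))

namespace IsCorrChar

variable {p : ℕ} {F : IntermediateField ℚ ℂ} {𝔭 : Ideal (𝓞 F)} {ψ : DirichletCharacter ℂ p}

lemma exists_algebraMap_eq (hψ : IsCorrChar p F 𝔭 ψ) (hp : 1 < p) (a : ZMod p) :
    ∃ b : 𝓞 F, algebraMap (𝓞 F) ℂ b = ψ a := by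
  have : NeZero p := ⟨by omega⟩
  have : Nontrivial (ZMod p) := ZMod.nontrivial_iff.mpr hp.ne'
  rcases Nat.eq_zero_or_pos a.val with ha | ha
  · exact ⟨0, by rw [map_zero, (ZMod.val_eq_zero a).mp ha, MulChar.map_zero]⟩
  · obtain ⟨b, hb, -⟩ := hψ a.val ha (Nat.le_sub_one_of_lt a.val_lt)
    exact ⟨b, by rwa [ZMod.natCast_zmod_val] at hb⟩

lemma exists_algebraMap_eq_sum (hψ : IsCorrChar p F 𝔭 ψ) (hp : 1 < p) {ι : Type*}
    (s : Finset ι) (f : ι → ZMod p) :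
    ∃ t : 𝓞 F, algebraMap (𝓞 F) ℂ t = ∑ i ∈ s, ψ (f i) := by
  choose lift hlift using hψ.exists_algebraMap_eq hp
  exact ⟨∑ i ∈ s, lift (f i), by simp only [map_sum, hlift]⟩

/-- The lift of `ψ(m)` to `𝓞 F` is unique, so every lift satisfies the congruence. -/
lemma mul_natCast_sub_one_mem (hψ : IsCorrChar p F 𝔭 ψ) {m : ℕ} (hm1 : 1 ≤ m)
    (hm2 : m ≤ p - 1) {b : 𝓞 F} (hb : algebraMap (𝓞 F) ℂ b = ψ m) :
    b * m - 1 ∈ 𝔭 := by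
  obtain ⟨b', hb', hmem⟩ := hψ m hm1 hm2
  rwa [F.ringOfIntegers_algebraMap_injective (hb.trans hb'.symm)]

lemma exists_algebraMap_eq_bernoulliOne (hψ : IsCorrChar p F 𝔭 ψ) (hp : 1 < p)
    (h𝔭p : (p : 𝓞 F) ∈ 𝔭) :
    ∃ S : 𝓞 F, algebraMap (𝓞 F) ℂ S = p * bernoulliOne p ψ ∧ S + 1 ∈ 𝔭 := by
  choose lift hlift using hψ.exists_algebraMap_eq hp
  refine ⟨∑ m ∈ Finset.Icc 1 (p - 1), lift m * m, ?_, ?_⟩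
  · have hp0 : (p : ℂ) ≠ 0 := by exact_mod_cast (show p ≠ 0 by omega)
    simp only [bernoulliOne, map_sum, map_mul, map_natCast, hlift, mul_inv_cancel_left₀ hp0]
  · have hsum : ∑ m ∈ Finset.Icc 1 (p - 1), (lift m * m - 1) ∈ 𝔭 :=
      Ideal.sum_mem _ fun m hm => hψ.mul_natCast_sub_one_mem
        (Finset.mem_Icc.mp hm).1 (Finset.mem_Icc.mp hm).2 (hlift m)
    have hcount : ∑ m ∈ Finset.Icc 1 (p - 1), (1 : 𝓞 F) = p - 1 := by
      rw [Finset.sum_const, Nat.card_Icc, Nat.add_sub_cancel, nsmul_one,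
        Nat.cast_sub hp.le, Nat.cast_one]
    rw [Finset.sum_sub_distrib, hcount] at hsum
    convert Ideal.add_mem _ hsum h𝔭p using 1
    ring

end IsCorrChar

theorem eisenstein_weight_one_congruent_to_one_general
    (p : ℕ) (hp : p.Prime)
    (ζ : ℂ)
    (𝔭 : Ideal (𝓞 ℚ⟮ζ⟯)) (h𝔭 : 𝔭.IsPrime) (h𝔭p : (p : 𝓞 ℚ⟮ζ⟯) ∈ 𝔭)
    (ψ : DirichletCharacter ℂ p) (hψ : IsCorrChar p ℚ⟮ζ⟯ 𝔭 ψ) :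
    bernoulliOne p ψ ≠ 0 ∧
      ∀ n : ℕ, 1 ≤ n → ∃ b s : 𝓞 ℚ⟮ζ⟯, b ∈ 𝔭 ∧ s ∉ 𝔭 ∧
        ((s : ℚ⟮ζ⟯) : ℂ) *
            ((2 / bernoulliOne p ψ) * ∑ d ∈ n.divisors, ψ (d : ZMod p)) =
          ((b : ℚ⟮ζ⟯) : ℂ) := by
  obtain ⟨S, hS, hS𝔭⟩ := hψ.exists_algebraMap_eq_bernoulliOne hp.one_lt h𝔭p
  have hS_notMem : S ∉ 𝔭 := Ideal.notMem_of_add_one_mem h𝔭.ne_top hS𝔭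
  have hS_ne_zero : algebraMap (𝓞 ℚ⟮ζ⟯) ℂ S ≠ 0 :=
    (map_ne_zero_iff _ ℚ⟮ζ⟯.ringOfIntegers_algebraMap_injective).mpr
      (ne_of_mem_of_not_mem 𝔭.zero_mem hS_notMem).symm
  have hB : bernoulliOne p ψ ≠ 0 := right_ne_zero_of_mul (hS ▸ hS_ne_zero)
  refine ⟨hB, fun n _ ↦ ?_⟩
  obtain ⟨T, hT⟩ := hψ.exists_algebraMap_eq_sum hp.one_lt n.divisors (fun d ↦ d)
  refine ⟨p * (2 * T), S, Ideal.mul_mem_right _ _ h𝔭p, hS_notMem, ?_⟩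
  rw [← ℚ⟮ζ⟯.algebraMap_ringOfIntegers_apply, ← ℚ⟮ζ⟯.algebraMap_ringOfIntegers_apply, hS,
    map_mul, map_mul, map_natCast, map_ofNat, hT]
  field_simp

/-- **Theorem 2.4 (Lang; Rasmussen)**.  Let `ψ` be the character mod `p` corresponding to
a prime `𝔭` of `ℤ[ζ_{p-1}]` above `p`.  Then `B_{1,ψ} ≠ 0` and, for every `n ≥ 1`, the
`n`-th coefficient `(2/B_{1,ψ})·∑_{d ∣ n} ψ(d)` of `1 - E_{1,ψ}` has `𝔭`-adic valuation
`ν_𝔭 ≥ 1`, i.e. it can be written as `b/s` with `b ∈ 𝔭` and `s ∈ 𝓞 ℚ(ζ_{p-1})`, `s ∉ 𝔭`.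
Equivalently, `ν_𝔭(E_{1,ψ}) ≥ 0` and `E_{1,ψ} ≡ 1 mod 𝔭`. -/
theorem eisenstein_weight_one_congruent_to_one
    (p : ℕ) (hp : p.Prime) (hodd : Odd p)
    (ζ : ℂ) (hζ : IsPrimitiveRoot ζ (p - 1))
    (𝔭 : Ideal (𝓞 ℚ⟮ζ⟯)) (h𝔭 : 𝔭.IsPrime) (h𝔭p : (p : 𝓞 ℚ⟮ζ⟯) ∈ 𝔭)
    (ψ : DirichletCharacter ℂ p) (hψ : IsCorrChar p ℚ⟮ζ⟯ 𝔭 ψ) :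
    bernoulliOne p ψ ≠ 0 ∧
      ∀ n : ℕ, 1 ≤ n → ∃ b s : 𝓞 ℚ⟮ζ⟯, b ∈ 𝔭 ∧ s ∉ 𝔭 ∧
        ((s : ℚ⟮ζ⟯) : ℂ) *
            ((2 / bernoulliOne p ψ) * ∑ d ∈ n.divisors, ψ (d : ZMod p)) =
          ((b : ℚ⟮ζ⟯) : ℂ) :=
  eisenstein_weight_one_congruent_to_one_general p hp ζ 𝔭 h𝔭 h𝔭p ψ hψ
end
end

section
/- Let p ≥ 5 be a prime, ζ_{p−1} a primitive (p−1)th root of unity, 𝔭 a prime ideal of ℤ[ζ_{p−1}] above p, and ψ the Dirichlet character mod p corresponding to 𝔭. Then there exists a prime ideal 𝔭' of ℤ[ζ_{p−1}] above p with 𝔭' ≠ 𝔭 such that Σ_{m=1}^{p−1} ψ(m)·m ∈ 𝔭' (equivalently, p·B_{1,ψ} ≡ 0 mod 𝔭', where B_{1,ψ} = (1/p)Σ_{m=1}^{p−1} ψ(m)·m). Consequently the Eisenstein series E_{1,ψ} is not congruent to 1 modulo the full ideal pℤ[ζ_{p−1}]. -/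
open Complex NumberField
open scoped IntermediateField

noncomputable section

/-! The character ψ is inverse to the Teichmüller character at `𝔭`: `ψ(m) ≡ m⁻¹ mod 𝔭`. Hence
`S = ∑ ψ(m) m ≡ p - 1 ≢ 0 mod 𝔭`, whereas the automorphism `σ` of `ℚ(ζ_{p-1})` inverting the roots
of unity sends `S` to `∑ ψ(m)⁻¹ m ≡ ∑ m² ≡ 0 mod 𝔭` because `p ≥ 5`. So `S` lies in the prime
`𝔭' = σ⁻¹ 𝔭 ≠ 𝔭`. As `p ∤ p - 1`, the prime `p` is unramified in `ℚ(ζ_{p-1})`, so `p ∉ 𝔭'²` and the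
first coefficient `2 / B_{1,ψ} = 2p / S` of `E_{1,ψ}` cannot be written `b / s` with `b ∈ 𝔭'` and
`s ∉ 𝔭'`. -/

open Finset

theorem IsPrimitiveRoot.isCyclotomicExtension_adjoin {K L : Type*} [Field K] [Field L]
    [Algebra K L] {n : ℕ} [NeZero n] {ζ : L} (hζ : IsPrimitiveRoot ζ n) :
    IsCyclotomicExtension {n} K K⟮ζ⟯ := by
  change IsCyclotomicExtension {n} K K⟮ζ⟯.toSubalgebra
  rw [IntermediateField.adjoin_simple_toSubalgebra_of_isAlgebraic
    ((hζ.isIntegral (NeZero.pos n)).tower_top (A := K)).isAlgebraic]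
  exact hζ.adjoin_isCyclotomicExtension K

theorem IntermediateField.coe_ringOfIntegers_injective {K L : Type*} [Field K] [Field L]
    [Algebra K L] (F : IntermediateField K L) : Function.Injective fun x : 𝓞 F => ((x : F) : L) :=
  Subtype.val_injective.comp RingOfIntegers.coe_injective

theorem DirichletCharacter.apply_pow_card_sub_one {R : Type*} [CommMonoidWithZero R] {p : ℕ}
    [Fact p.Prime] (χ : DirichletCharacter R p) {a : ZMod p} (ha : a ≠ 0) :
    χ a ^ (p - 1) = 1 := by
  rw [← map_pow, ZMod.pow_card_sub_one_eq_one ha, map_one]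

theorem Nat.sum_Icc_sq_mul_six (n : ℕ) :
    (∑ m ∈ Icc 1 n, m ^ 2) * 6 = n * (n + 1) * (2 * n + 1) := by
  induction n with
  | zero => simp
  | succ n ih => rw [sum_Icc_succ_top (by omega), add_mul, ih]; ring

theorem Nat.Prime.dvd_sum_Icc_sq {p : ℕ} (hp : p.Prime) (hp5 : 5 ≤ p) :
    p ∣ ∑ m ∈ Icc 1 (p - 1), m ^ 2 := by
  have h6 : p ∣ (∑ m ∈ Icc 1 (p - 1), m ^ 2) * 6 := by
    rw [Nat.sum_Icc_sq_mul_six, Nat.sub_add_cancel hp.one_le]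
    exact (dvd_mul_left p (p - 1)).mul_right _
  refine (hp.coprime_iff_not_dvd.mpr fun h => ?_).dvd_of_dvd_mul_right h6
  rcases hp.dvd_mul.mp (show p ∣ 2 * 3 from h) with h | h <;>
    · have := Nat.le_of_dvd (by norm_num) h
      omega

namespace Ideal

section Congruences

variable {A : Type*} [CommRing A] {P : Ideal A} {p : ℕ} {b c : ℕ → A}

theorem sum_mul_natCast_notMem (hP : P ≠ ⊤) (hp : 1 ≤ p) (hpP : (p : A) ∈ P)
    (hb : ∀ m ∈ Icc 1 (p - 1), b m * m - 1 ∈ P) :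
    ∑ m ∈ Icc 1 (p - 1), b m * m ∉ P := by
  intro hS
  have hS1 : ∑ m ∈ Icc 1 (p - 1), b m * m + 1 = ∑ m ∈ Icc 1 (p - 1), (b m * m - 1) + p := by
    rw [sum_sub_distrib, sum_const, Nat.card_Icc, Nat.add_sub_cancel, nsmul_one,
      Nat.cast_pred hp]
    ring
  have h1 : ∑ m ∈ Icc 1 (p - 1), b m * m + 1 ∈ P := hS1 ▸ add_mem (P.sum_mem hb) hpP
  exact hP ((eq_top_iff_one P).mpr ((P.add_mem_iff_right hS).mp h1))

theorem sum_mul_natCast_mem (hp : p.Prime) (hp5 : 5 ≤ p) (hpP : (p : A) ∈ P)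
    (hb : ∀ m ∈ Icc 1 (p - 1), b m * m - 1 ∈ P) (hc : ∀ m ∈ Icc 1 (p - 1), c m * b m = 1) :
    ∑ m ∈ Icc 1 (p - 1), c m * m ∈ P := by
  have h : ∑ m ∈ Icc 1 (p - 1), c m * m = ∑ m ∈ Icc 1 (p - 1), -(c m * m) * (b m * m - 1) +
      ((∑ m ∈ Icc 1 (p - 1), m ^ 2 : ℕ) : A) := by
    push_cast
    rw [← sum_add_distrib]
    refine sum_congr rfl fun m hm => ?_
    linear_combination (m : A) ^ 2 * hc m hm
  obtain ⟨k, hk⟩ := hp.dvd_sum_Icc_sq hp5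
  rw [h, hk, Nat.cast_mul]
  exact add_mem (P.sum_mem fun m hm => P.mul_mem_left _ (hb m hm)) (P.mul_mem_right _ hpP)

end Congruences

variable {R : Type*} [CommRing R] {P : Ideal R} {p : ℕ}

theorem liesOver_span_natCast (hP : P ≠ ⊤) (hp : p.Prime) (hpP : (p : R) ∈ P) :
    P.LiesOver (span {(p : ℤ)}) :=
  (liesOver_span_iff hP (Nat.prime_iff_prime_int.mp hp)).mpr (by simpa using hpP)

theorem natCast_mem_iff_dvd (hP : P ≠ ⊤) (hp : p.Prime) (hpP : (p : R) ∈ P) (m : ℕ) :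
    (m : R) ∈ P ↔ p ∣ m := by
  have := liesOver_span_natCast hP hp hpP
  simpa [mem_span_singleton, Int.natCast_dvd_natCast] using
    (mem_of_liesOver P (span {(p : ℤ)}) m).symm

end Ideal

namespace IsCyclotomicExtension.Rat

variable {K : Type*} [Field K] [NumberField K]

theorem exists_smul_mul_self_eq_one (n : ℕ) [NeZero n] [IsCyclotomicExtension {n} ℚ K] :
    ∃ σ : Gal(K/ℚ), ∀ x : 𝓞 K, x ^ n = 1 → σ • x * x = 1 := by
  refine ⟨(galEquivZMod n K).symm (-1), fun x hx => ?_⟩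
  obtain ⟨k, rfl⟩ := Nat.exists_eq_succ_of_ne_zero (NeZero.ne n)
  rw [galEquivZMod_smul_of_pow_eq _ K _ hx, MulEquiv.apply_symm_apply, Units.val_neg,
    Units.val_one, ZMod.val_neg_one, ← pow_succ, hx]

theorem exists_isPrime_sum_mul_natCast_mem {p : ℕ} (hp : p.Prime) (hp5 : 5 ≤ p)
    [IsCyclotomicExtension {p - 1} ℚ K] {𝔭 : Ideal (𝓞 K)} [𝔭.IsPrime] (h𝔭p : (p : 𝓞 K) ∈ 𝔭)
    {b : ℕ → 𝓞 K} (hb_pow : ∀ m ∈ Icc 1 (p - 1), b m ^ (p - 1) = 1)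
    (hb : ∀ m ∈ Icc 1 (p - 1), b m * m - 1 ∈ 𝔭) :
    ∃ 𝔭' : Ideal (𝓞 K), 𝔭'.IsPrime ∧ (p : 𝓞 K) ∈ 𝔭' ∧ ∑ m ∈ Icc 1 (p - 1), b m * m ∈ 𝔭' := by
  have : NeZero (p - 1) := ⟨by omega⟩
  obtain ⟨σ, hσ⟩ := exists_smul_mul_self_eq_one (K := K) (p - 1)
  let τ := MulSemiringAction.toRingHom _ (𝓞 K) σ
  refine ⟨𝔭.comap τ, inferInstance, by rwa [Ideal.mem_comap, map_natCast], ?_⟩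
  rw [Ideal.mem_comap, map_sum]
  simp_rw [map_mul, map_natCast]
  exact Ideal.sum_mul_natCast_mem hp hp5 h𝔭p hb fun m hm => hσ _ (hb_pow m hm)

variable {n p : ℕ} [NeZero n] [Fact p.Prime] [IsCyclotomicExtension {n} ℚ K]
  {P : Ideal (𝓞 K)} [P.IsPrime]

theorem natCast_notMem_sq (hpn : ¬ p ∣ n) (hpP : (p : 𝓞 K) ∈ P) : (p : 𝓞 K) ∉ P ^ 2 := by
  intro h
  have := Ideal.liesOver_span_natCast Ideal.IsPrime.ne_top' Fact.out hpP
  have hmap : (Ideal.span {(p : ℤ)}).map (algebraMap ℤ (𝓞 K)) = Ideal.span {(p : 𝓞 K)} := by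
    simp [Ideal.map_span]
  have hne : Ideal.span {(p : 𝓞 K)} ≠ ⊥ := by
    simpa using NeZero.ne (p : 𝓞 K)
  -- `p` is unramified: `P` occurs exactly once in `(p)`
  have he := ramificationIdx_eq_of_not_dvd p K P hpn
  rw [Ideal.IsDedekindDomain.ramificationIdx_eq_multiplicity _ P (hmap ▸ hne), hmap] at he
  have hP0 : P ≠ ⊥ := by
    rintro rfl
    exact hne (by simpa using (Submodule.mem_bot _).1 hpP)
  have := (FiniteMultiplicity.of_prime_left (Ideal.prime_of_isPrime hP0 ‹_›) hne)
    |>.le_multiplicity_of_pow_dvd (k := 2) (Ideal.dvd_span_singleton.mpr h)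
  omega

theorem two_mul_mul_natCast_ne (hp2 : p ≠ 2) (hpn : ¬ p ∣ n) (hpP : (p : 𝓞 K) ∈ P)
    {S c s : 𝓞 K} (hS : S ∈ P) (hc : c ∈ P) (hs : s ∉ P) : 2 * s * p ≠ c * S := by
  intro h
  have h2 : (2 : 𝓞 K) ∉ P := by
    rw [← Nat.cast_ofNat, Ideal.natCast_mem_iff_dvd Ideal.IsPrime.ne_top' Fact.out hpP,
      Nat.prime_dvd_prime_iff_eq Fact.out Nat.prime_two]
    exact hp2
  refine natCast_notMem_sq hpn hpP ((Ideal.IsPrime.mul_mem_pow P ?_).resolve_left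
    (Ideal.IsPrime.mul_notMem inferInstance h2 hs))
  rw [h, sq]
  exact Ideal.mul_mem_mul hc hS

end IsCyclotomicExtension.Rat

theorem IsCorrChar.exists_lift {p : ℕ} [Fact p.Prime] {F : IntermediateField ℚ ℂ}
    {𝔭 : Ideal (𝓞 F)} {ψ : DirichletCharacter ℂ p} (hψ : IsCorrChar p F 𝔭 ψ) :
    ∃ b : ℕ → 𝓞 F, (∀ m ∈ Icc 1 (p - 1), b m ^ (p - 1) = 1) ∧
      (∀ m ∈ Icc 1 (p - 1), b m * m - 1 ∈ 𝔭) ∧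
      (((∑ m ∈ Icc 1 (p - 1), b m * m : 𝓞 F) : F) : ℂ) = ∑ m ∈ Icc 1 (p - 1), ψ m * m := by
  choose! b hbψ hb𝔭 using hψ
  have hbψ' (m : ℕ) (hm : m ∈ Icc 1 (p - 1)) : ((b m : F) : ℂ) = ψ m :=
    hbψ m (mem_Icc.mp hm).1 (mem_Icc.mp hm).2
  refine ⟨b, fun m hm => ?_, fun m hm => hb𝔭 m (mem_Icc.mp hm).1 (mem_Icc.mp hm).2, ?_⟩
  · apply F.coe_ringOfIntegers_injective
    have hm0 : (m : ZMod p) ≠ 0 := by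
      rw [Ne, ZMod.natCast_eq_zero_iff]
      exact Nat.not_dvd_of_pos_of_lt (mem_Icc.mp hm).1 (by grind)
    simpa [hbψ' m hm] using ψ.apply_pow_card_sub_one hm0
  · push_cast
    exact sum_congr rfl fun m hm => by rw [hbψ' m hm]

/-- **Remark 2.5 (2)**.  Let `p ≥ 5` be a prime and `ψ` the character mod `p`
corresponding to a prime `𝔭` of `ℤ[ζ_{p-1}]` above `p`.  Then there is a prime ideal
`𝔭' ≠ 𝔭` of `ℤ[ζ_{p-1}]` above `p` with `∑_{m=1}^{p-1} ψ(m)·m ∈ 𝔭'` (equivalently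
`p·B_{1,ψ} ≡ 0 mod 𝔭'`); consequently `E_{1,ψ}` is not congruent to `1` modulo the full
ideal `pℤ[ζ_{p-1}]`, i.e. it is not the case that for every prime `𝔮` above `p` and
every `n ≥ 1` the `n`-th coefficient `(2/B_{1,ψ})·∑_{d ∣ n} ψ(d)` has `ν_𝔮 ≥ 1`. -/
theorem eisenstein_weight_one_not_congruent_to_one_mod_p
    (p : ℕ) (hp : p.Prime) (hp5 : 5 ≤ p)
    (ζ : ℂ) (hζ : IsPrimitiveRoot ζ (p - 1))
    (𝔭 : Ideal (𝓞 ℚ⟮ζ⟯)) (h𝔭 : 𝔭.IsPrime) (h𝔭p : (p : 𝓞 ℚ⟮ζ⟯) ∈ 𝔭)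
    (ψ : DirichletCharacter ℂ p) (hψ : IsCorrChar p ℚ⟮ζ⟯ 𝔭 ψ) :
    (∃ 𝔭' : Ideal (𝓞 ℚ⟮ζ⟯), 𝔭'.IsPrime ∧ (p : 𝓞 ℚ⟮ζ⟯) ∈ 𝔭' ∧ 𝔭' ≠ 𝔭 ∧
        ∀ S : 𝓞 ℚ⟮ζ⟯,
          ((S : ℚ⟮ζ⟯) : ℂ) = ∑ m ∈ Finset.Icc 1 (p - 1), ψ (m : ZMod p) * (m : ℂ) →
            S ∈ 𝔭') ∧
      ¬ (∀ 𝔮 : Ideal (𝓞 ℚ⟮ζ⟯), 𝔮.IsPrime → (p : 𝓞 ℚ⟮ζ⟯) ∈ 𝔮 →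
          ∀ n : ℕ, 1 ≤ n → ∃ b s : 𝓞 ℚ⟮ζ⟯, b ∈ 𝔮 ∧ s ∉ 𝔮 ∧
            ((s : ℚ⟮ζ⟯) : ℂ) *
                ((2 / bernoulliOne p ψ) * ∑ d ∈ n.divisors, ψ (d : ZMod p)) =
              ((b : ℚ⟮ζ⟯) : ℂ)) := by
  have : Fact p.Prime := ⟨hp⟩
  have : NeZero (p - 1) := ⟨by omega⟩
  have : IsCyclotomicExtension {p - 1} ℚ ℚ⟮ζ⟯ := hζ.isCyclotomicExtension_adjoin
  have := IsCyclotomicExtension.numberField {p - 1} ℚ ℚ⟮ζ⟯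
  have hcoe := ℚ⟮ζ⟯.coe_ringOfIntegers_injective
  obtain ⟨b, hb_pow, hb𝔭, hS₀⟩ := hψ.exists_lift
  set S₀ := ∑ m ∈ Icc 1 (p - 1), b m * m
  have hS₀𝔭 : S₀ ∉ 𝔭 := Ideal.sum_mul_natCast_notMem h𝔭.ne_top hp.one_le h𝔭p hb𝔭
  obtain ⟨𝔭', h𝔭', h𝔭'p, hS₀𝔭' : S₀ ∈ 𝔭'⟩ :=
    IsCyclotomicExtension.Rat.exists_isPrime_sum_mul_natCast_mem hp hp5 h𝔭p hb_pow hb𝔭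
  refine ⟨⟨𝔭', h𝔭', h𝔭'p, fun h => hS₀𝔭 (h ▸ hS₀𝔭'),
    fun S hS => (hcoe (hS.trans hS₀.symm) : S = S₀) ▸ hS₀𝔭'⟩, fun H => ?_⟩
  obtain ⟨c, s, hc, hs, hcs⟩ := H 𝔭' h𝔭' h𝔭'p 1 le_rfl
  refine IsCyclotomicExtension.Rat.two_mul_mul_natCast_ne (n := p - 1) (by omega)
    (Nat.not_dvd_of_pos_of_lt (by omega) (by omega)) h𝔭'p hS₀𝔭' hc hs (hcoe ?_)
  have hS₀0 : ((S₀ : ℚ⟮ζ⟯) : ℂ) ≠ 0 := fun h =>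
    hS₀𝔭 ((hcoe (by simpa using h) : S₀ = 0) ▸ 𝔭.zero_mem)
  rw [bernoulliOne, ← hS₀, Nat.divisors_one, sum_singleton, Nat.cast_one, map_one, mul_one] at hcs
  push_cast
  rw [← hcs, show (((2 : 𝓞 ℚ⟮ζ⟯) : ℚ⟮ζ⟯) : ℂ) = 2 from rfl]
  field_simp
end
end
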